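/- arXiv:2201.09453 — 3 statements merged into one kernel-verified Lean document; each statement's English description precedes it below -/
import Mathlib

section
/- For all real parameters a > 0, b > 1, T > 0, the saturated Nussbaum function N_{a,b,T} is continuous on ℝ. -/
open Real Filter Set

/-- Breakpoints `s_n(b,T) = T·π·(b^n − 1)/(b − 1)`. -/
noncomputable def brk (b T : ℝ) (n : ℕ) : ℝ := T * Real.pi * (b ^ n - 1) / (b - 1)

/-- Index of the segment containing `x ≥ 0`: the unique `m` with `s_m ≤ x < s_{m+1}`
(for `b > 1`, `T > 0`). -/
noncomputable def seg (b T x : ℝ) : ℕ := sInf {n : ℕ | x < brk b T (n + 1)}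

/-- The saturated Nussbaum function `N_{a,b,T}`: on `[s_{n−1}, s_n)` (with `m = n − 1`)
it equals `(−1)^m·a·cos((χ − s_m)/(b^m·T))`, extended evenly to `χ < 0`. -/
noncomputable def satN (a b T : ℝ) (χ : ℝ) : ℝ :=
  (-1 : ℝ) ^ (seg b T |χ|) * a *
    Real.cos ((|χ| - brk b T (seg b T |χ|)) / (b ^ (seg b T |χ|) * T))

/-- The integrated function `G_{a,b,T}(χ) = ∫_0^χ N_{a,b,T}(τ) dτ`. -/
noncomputable def satG (a b T : ℝ) (χ : ℝ) : ℝ := ∫ τ in (0:ℝ)..χ, satN a b T τ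

/-! A function glued from continuous pieces `F n` on the intervals `[s n, s (n+1)]` of an unbounded
increasing sequence of breakpoints is continuous as soon as consecutive pieces agree at the shared
breakpoint: by induction it is continuous on every `Iic (s n)`, and these sets are neighbourhoods
exhausting `ℝ`. On the `n`-th interval, of length `π T bⁿ`, the Nussbaum piece runs through half a
period of the cosine, so it ends at `(-1)ⁿ⁺¹ a`, where the next piece starts. -/

/-- `seg b T` is `pieceIndex (brk b T)` by definition. -/
noncomputable def pieceIndex (s : ℕ → ℝ) (x : ℝ) : ℕ := sInf {n : ℕ | x < s (n + 1)}

section Gluing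

variable {s : ℕ → ℝ} {F : ℕ → ℝ → ℝ}

lemma pieceIndex_eq (hs : StrictMono s) {x : ℝ} {m : ℕ} (hm : s m ≤ x) (hx : x < s (m + 1)) :
    pieceIndex s x = m :=
  le_antisymm (Nat.sInf_le hx) <| le_csInf ⟨m, hx⟩ fun _ hn =>
    Nat.lt_succ_iff.mp (hs.lt_iff_lt.mp (hm.trans_lt hn))

lemma pieceIndex_eq_zero {x : ℝ} (hx : x < s 1) : pieceIndex s x = 0 :=
  Nat.le_zero.mp (Nat.sInf_le hx)

lemma eqOn_Icc_pieceIndex (hs : StrictMono s)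
    (hF : ∀ n, F n (s (n + 1)) = F (n + 1) (s (n + 1))) (n : ℕ) :
    EqOn (fun x => F (pieceIndex s x) x) (F n) (Icc (s n) (s (n + 1))) := by
  rintro x ⟨hnx, hxn⟩
  rcases hxn.lt_or_eq with hlt | rfl
  · simp only [pieceIndex_eq hs hnx hlt]
  · simp only [pieceIndex_eq hs le_rfl (hs (Nat.lt_succ_self _)), hF]

lemma continuousOn_Iic_pieceIndex (hs : StrictMono s) (hcont : ∀ n, Continuous (F n))
    (hF : ∀ n, F n (s (n + 1)) = F (n + 1) (s (n + 1))) (n : ℕ) :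
    ContinuousOn (fun x => F (pieceIndex s x) x) (Iic (s n)) := by
  induction n with
  | zero =>
    refine (hcont 0).continuousOn.congr fun x hx => ?_
    simp only [pieceIndex_eq_zero ((mem_Iic.mp hx).trans_lt (hs Nat.zero_lt_one))]
  | succ n ih =>
    rw [← Iic_union_Icc_eq_Iic (hs.monotone n.le_succ)]
    exact ih.union_of_isClosed ((hcont n).continuousOn.congr (eqOn_Icc_pieceIndex hs hF n))
      isClosed_Iic isClosed_Icc

theorem continuous_pieceIndex_glue (hs : StrictMono s) (hs_top : Tendsto s atTop atTop)
    (hcont : ∀ n, Continuous (F n)) (hF : ∀ n, F n (s (n + 1)) = F (n + 1) (s (n + 1))) :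
    Continuous fun x => F (pieceIndex s x) x :=
  continuous_iff_continuousAt.mpr fun x =>
    let ⟨n, hn⟩ := (hs_top.eventually_gt_atTop x).exists
    (continuousOn_Iic_pieceIndex hs hcont hF n).continuousAt (Iic_mem_nhds hn)

end Gluing

section Breakpoints

variable {b T : ℝ}

lemma brk_eq_mul (n : ℕ) : brk b T n = T * π / (b - 1) * (b ^ n - 1) := by
  rw [brk, div_mul_eq_mul_div]

lemma brk_succ_sub (hb : 1 < b) (n : ℕ) : brk b T (n + 1) - brk b T n = T * π * b ^ n := by
  rw [brk, brk, ← sub_div, div_eq_iff (sub_ne_zero.mpr hb.ne')]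
  ring

lemma brk_strictMono (hb : 1 < b) (hT : 0 < T) : StrictMono (brk b T) := fun m n hmn => by
  have hc : 0 < T * π / (b - 1) := div_pos (by positivity) (sub_pos.mpr hb)
  rw [brk_eq_mul, brk_eq_mul]
  exact mul_lt_mul_of_pos_left (sub_lt_sub_right (pow_lt_pow_right₀ hb hmn) 1) hc

lemma tendsto_brk_atTop (hb : 1 < b) (hT : 0 < T) : Tendsto (brk b T) atTop atTop := by
  have hc : 0 < T * π / (b - 1) := div_pos (by positivity) (sub_pos.mpr hb)
  refine ((tendsto_atTop_add_const_right atTop (-1 : ℝ)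
    (tendsto_pow_atTop_atTop_of_one_lt hb)).const_mul_atTop hc).congr fun n => ?_
  rw [brk_eq_mul, ← sub_eq_add_neg]

end Breakpoints

noncomputable def nussbaumPiece (a b T : ℝ) (n : ℕ) (x : ℝ) : ℝ :=
  (-1 : ℝ) ^ n * a * cos ((x - brk b T n) / (b ^ n * T))

lemma continuous_nussbaumPiece (a b T : ℝ) (n : ℕ) : Continuous (nussbaumPiece a b T n) := by
  unfold nussbaumPiece
  fun_prop

lemma nussbaumPiece_brk_succ {b T : ℝ} (a : ℝ) (hb : 1 < b) (hT : 0 < T) (n : ℕ) :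
    nussbaumPiece a b T n (brk b T (n + 1)) = nussbaumPiece a b T (n + 1) (brk b T (n + 1)) := by
  have hbnT : b ^ n * T ≠ 0 := by positivity
  have hhalf : (brk b T (n + 1) - brk b T n) / (b ^ n * T) = π := by
    rw [brk_succ_sub hb, div_eq_iff hbnT]
    ring
  simp only [nussbaumPiece, hhalf, sub_self, zero_div, cos_pi, cos_zero, pow_succ]
  ring

theorem satN_continuous_general (a b T : ℝ) (hb : 1 < b) (hT : 0 < T) :
    Continuous (satN a b T) :=
  (continuous_pieceIndex_glue (brk_strictMono hb hT) (tendsto_brk_atTop hb hT)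
    (continuous_nussbaumPiece a b T) (nussbaumPiece_brk_succ a hb hT)).comp continuous_abs

/-- the saturated Nussbaum function `N_{a,b,T}` is continuous on ℝ. -/
theorem satN_continuous (a b T : ℝ) (ha : 0 < a) (hb : 1 < b) (hT : 0 < T) :
    Continuous (satN a b T) :=
  satN_continuous_general a b T hb hT
end

section
/- For all real parameters a > 0, b > 1, T > 0, every integer n ≥ 1, and every χ ∈ [0, s_n(b,T)], one has |G_{a,b,T}(χ)| ≤ a·T·b^{n−1}. -/
open Real Filter Set

/-!
On the segment `[s_m, s_{m+1}]` the function `N` is `(-1)^m a cos((χ - s_m)/(b^m T))`, whose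
integral from `s_m` is `(-1)^m a b^m T sin((χ - s_m)/(b^m T))`. Since `s_{m+1} - s_m = π b^m T`,
every full segment contributes `sin π = 0`, so `G(s_m) = 0` and `G` equals that sine term on the
`m`-th segment. Hence `|G| ≤ a T b^m` there, and `[0, s_n]` is covered by the segments `m < n`.
-/

section Breakpoints

variable {b T : ℝ}

lemma brk_zero : brk b T 0 = 0 := by simp [brk]

lemma brk_succ (hb : b ≠ 1) (m : ℕ) : brk b T (m + 1) = brk b T m + π * T * b ^ m := by
  have h : b - 1 ≠ 0 := sub_ne_zero.mpr hb
  simp only [brk]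
  field_simp
  ring

lemma brk_nonneg (hb : 1 < b) (hT : 0 < T) (m : ℕ) : 0 ≤ brk b T m :=
  brk_zero.symm.le.trans ((brk_strictMono hb hT).monotone (Nat.zero_le m))

lemma seg_eq_of_mem_Ico (hb : 1 < b) (hT : 0 < T) {m : ℕ} {x : ℝ}
    (hx : x ∈ Ico (brk b T m) (brk b T (m + 1))) : seg b T x = m := by
  refine le_antisymm (Nat.sInf_le hx.2) (not_lt.mp fun hlt => ?_)
  have hmem : x < brk b T (seg b T x + 1) :=
    Nat.sInf_mem (s := {n : ℕ | x < brk b T (n + 1)}) ⟨m, hx.2⟩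
  have := (brk_strictMono hb hT).monotone (show seg b T x + 1 ≤ m by omega)
  linarith [hx.1]

lemma exists_mem_Icc_brk (hb : 1 < b) (hT : 0 < T) {x : ℝ} {n : ℕ}
    (hx : x ∈ Icc 0 (brk b T n)) :
    ∃ m ≤ n - 1, x ∈ Icc (brk b T m) (brk b T (m + 1)) := by
  induction n with
  | zero =>
    exact ⟨0, le_rfl, brk_zero.trans_le hx.1,
      hx.2.trans ((brk_strictMono hb hT).monotone (Nat.zero_le 1))⟩
  | succ n ih =>
    rcases le_or_gt x (brk b T n) with h | h
    · obtain ⟨m, hm, hxm⟩ := ih ⟨hx.1, h⟩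
      exact ⟨m, by omega, hxm⟩
    · exact ⟨n, by omega, h.le, hx.2⟩

end Breakpoints

section Integral

open MeasureTheory

variable {a b T : ℝ}

lemma integral_cos_sub_div (s c u v : ℝ) (hc : c ≠ 0) :
    ∫ x in u..v, cos ((x - s) / c) = c * (sin ((v - s) / c) - sin ((u - s) / c)) := by
  rw [intervalIntegral.integral_comp_sub_right (fun y => cos (y / c)),
    intervalIntegral.integral_comp_div _ hc, integral_cos, smul_eq_mul]

lemma satN_ae_eq_on_segment (hb : 1 < b) (hT : 0 < T) (a : ℝ) {m : ℕ} {χ : ℝ}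
    (hχ : χ ∈ Icc (brk b T m) (brk b T (m + 1))) :
    ∀ᵐ x, x ∈ uIoc (brk b T m) χ →
      satN a b T x = (-1) ^ m * a * cos ((x - brk b T m) / (b ^ m * T)) := by
  filter_upwards [Measure.ae_ne volume (brk b T (m + 1))] with x hx hxI
  rw [uIoc_of_le hχ.1] at hxI
  have hxm : x ∈ Ico (brk b T m) (brk b T (m + 1)) :=
    ⟨hxI.1.le, lt_of_le_of_ne (hxI.2.trans hχ.2) hx⟩
  rw [satN, abs_of_nonneg ((brk_nonneg hb hT m).trans hxm.1), seg_eq_of_mem_Ico hb hT hxm]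

lemma intervalIntegrable_satN_segment (hb : 1 < b) (hT : 0 < T) (a : ℝ) {m : ℕ} {χ : ℝ}
    (hχ : χ ∈ Icc (brk b T m) (brk b T (m + 1))) :
    IntervalIntegrable (satN a b T) volume (brk b T m) χ := by
  have hcont : Continuous fun x => (-1 : ℝ) ^ m * a * cos ((x - brk b T m) / (b ^ m * T)) := by
    fun_prop
  refine (hcont.intervalIntegrable _ _).congr_ae ?_
  rw [EventuallyEq, ae_restrict_iff' measurableSet_uIoc]
  exact (satN_ae_eq_on_segment hb hT a hχ).mono fun x h hx => (h hx).symm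

lemma integral_satN_segment (hb : 1 < b) (hT : 0 < T) (a : ℝ) {m : ℕ} {χ : ℝ}
    (hχ : χ ∈ Icc (brk b T m) (brk b T (m + 1))) :
    ∫ x in brk b T m..χ, satN a b T x =
      (-1) ^ m * a * (b ^ m * T) * sin ((χ - brk b T m) / (b ^ m * T)) := by
  have hc : b ^ m * T ≠ 0 := by have := hb.le; positivity
  rw [intervalIntegral.integral_congr_ae (satN_ae_eq_on_segment hb hT a hχ),
    intervalIntegral.integral_const_mul, integral_cos_sub_div _ _ _ _ hc]
  simp only [sub_self, zero_div, sin_zero, sub_zero]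
  ring

lemma integral_satN_full_segment (hb : 1 < b) (hT : 0 < T) (a : ℝ) (m : ℕ) :
    ∫ x in brk b T m..brk b T (m + 1), satN a b T x = 0 := by
  have hc : b ^ m * T ≠ 0 := by have := hb.le; positivity
  have hπ : (brk b T (m + 1) - brk b T m) / (b ^ m * T) = π := by
    rw [brk_succ hb.ne']
    field_simp
    ring
  rw [integral_satN_segment hb hT a ⟨(brk_strictMono hb hT (Nat.lt_succ_self m)).le, le_rfl⟩,
    hπ, sin_pi, mul_zero]

lemma satG_eq_on_segment (hb : 1 < b) (hT : 0 < T) (a : ℝ) {m : ℕ} {χ : ℝ}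
    (hχ : χ ∈ Icc (brk b T m) (brk b T (m + 1))) :
    satG a b T χ = (-1) ^ m * a * (b ^ m * T) * sin ((χ - brk b T m) / (b ^ m * T)) := by
  have hfull : ∀ k < m, IntervalIntegrable (satN a b T) volume (brk b T k) (brk b T (k + 1)) :=
    fun k _ => intervalIntegrable_satN_segment hb hT a
      ⟨(brk_strictMono hb hT (Nat.lt_succ_self k)).le, le_rfl⟩
  have hG_brk : ∫ x in (0 : ℝ)..brk b T m, satN a b T x = 0 := by
    simpa only [brk_zero, integral_satN_full_segment hb hT a, Finset.sum_const_zero] using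
      (intervalIntegral.sum_integral_adjacent_intervals hfull).symm
  have hint0 : IntervalIntegrable (satN a b T) volume 0 (brk b T m) := by
    simpa only [brk_zero] using IntervalIntegrable.trans_iterate hfull
  rw [satG, ← intervalIntegral.integral_add_adjacent_intervals hint0
    (intervalIntegrable_satN_segment hb hT a hχ), hG_brk, zero_add,
    integral_satN_segment hb hT a hχ]

lemma abs_satG_le_on_segment (ha : 0 ≤ a) (hb : 1 < b) (hT : 0 < T) {m : ℕ} {χ : ℝ}
    (hχ : χ ∈ Icc (brk b T m) (brk b T (m + 1))) :
    |satG a b T χ| ≤ a * T * b ^ m := by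
  have hc : 0 ≤ b ^ m * T := by have := hb.le; positivity
  rw [satG_eq_on_segment hb hT a hχ, abs_mul, abs_mul, abs_mul, abs_pow, abs_neg, abs_one,
    one_pow, one_mul, abs_of_nonneg ha, abs_of_nonneg hc]
  calc a * (b ^ m * T) * |sin ((χ - brk b T m) / (b ^ m * T))|
      ≤ a * (b ^ m * T) * 1 := by gcongr; exact abs_sin_le_one _
    _ = a * T * b ^ m := by ring

end Integral

theorem satG_bound_general (a b T : ℝ) (ha : 0 < a) (hb : 1 < b) (hT : 0 < T)
    (n : ℕ) (χ : ℝ) (hχ : χ ∈ Set.Icc (0 : ℝ) (brk b T n)) :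
    |satG a b T χ| ≤ a * T * b ^ (n - 1) := by
  obtain ⟨m, hmn, hχm⟩ := exists_mem_Icc_brk hb hT hχ
  calc |satG a b T χ| ≤ a * T * b ^ m := abs_satG_le_on_segment ha.le hb hT hχm
    _ ≤ a * T * b ^ (n - 1) := by gcongr; exact hb.le

/-- `|G_{a,b,T}(χ)| ≤ a·T·b^{n−1}` on `[0, s_n]`, `n ≥ 1`. -/
theorem satG_bound (a b T : ℝ) (ha : 0 < a) (hb : 1 < b) (hT : 0 < T)
    (n : ℕ) (hn : 1 ≤ n) (χ : ℝ) (hχ : χ ∈ Set.Icc (0 : ℝ) (brk b T n)) :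
    |satG a b T χ| ≤ a * T * b ^ (n - 1) :=
  satG_bound_general a b T ha hb hT n χ hχ
end

section
/- (Barbalat's Lemma) Let f : [0, ∞) → ℝ be uniformly continuous, and suppose that the limit lim_{t→∞} ∫_0^t f(s) ds exists and is finite. Then lim_{t→∞} f(t) = 0. -/
/-!
Uniform continuity gives a window length `d > 0` on which `f` stays within `ε` of `f t`, so
`∫_t^{t+d} f` is at least `d (|f t| - ε)` in absolute value. Convergence of `∫_0^t f` forces these
window integrals to tend to `0`, hence eventually `|f t| < 2ε`.
-/

open Filter Set MeasureTheory intervalIntegral Topology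

open scoped Interval

theorem IntervalIntegrable.of_continuousOn_Ici {f : ℝ → ℝ} {a b c : ℝ}
    (hf : ContinuousOn f (Ici a)) (hb : a ≤ b) (hc : a ≤ c) :
    IntervalIntegrable f volume b c :=
  (hf.mono fun _ hx => le_trans (le_min hb hc) hx.1).intervalIntegrable

theorem tendsto_intervalIntegral_add_const_of_tendsto {f : ℝ → ℝ} {a l : ℝ}
    (hf : ContinuousOn f (Ici a))
    (hl : Tendsto (fun t => ∫ s in a..t, f s) atTop (𝓝 l)) (d : ℝ) :
    Tendsto (fun t => ∫ s in t..t + d, f s) atTop (𝓝 0) := by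
  have hdiff : Tendsto (fun t => (∫ s in a..t + d, f s) - ∫ s in a..t, f s) atTop (𝓝 0) := by
    simpa using (hl.comp (tendsto_atTop_add_const_right atTop d tendsto_id)).sub hl
  refine hdiff.congr' ?_
  filter_upwards [eventually_ge_atTop a, eventually_ge_atTop (a - d)] with t ht htd
  exact integral_interval_sub_left (.of_continuousOn_Ici hf le_rfl (by linarith))
    (.of_continuousOn_Ici hf le_rfl ht)

theorem mul_abs_le_abs_intervalIntegral_add {f : ℝ → ℝ} {t d η : ℝ} (hd : 0 ≤ d)
    (hf : IntervalIntegrable f volume t (t + d)) (hη : ∀ s ∈ Ioc t (t + d), |f s - f t| ≤ η) :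
    d * |f t| ≤ |∫ s in t..t + d, f s| + η * d := by
  have hdev : |(∫ s in t..t + d, f s) - d * f t| ≤ η * d := by
    have hI : Ι t (t + d) = Ioc t (t + d) := uIoc_of_le (by linarith)
    have h := norm_integral_le_of_norm_le_const (f := fun s => f s - f t) (C := η)
      fun s hs => hη s (hI ▸ hs)
    rwa [integral_sub hf intervalIntegrable_const, intervalIntegral.integral_const,
      add_sub_cancel_left, abs_of_nonneg hd, smul_eq_mul] at h
  have htri := abs_sub_abs_le_abs_sub (d * f t) (∫ s in t..t + d, f s)
  rw [abs_sub_comm, abs_mul, abs_of_nonneg hd] at htri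
  linarith

/-- Barbalat's Lemma: if `f : [0,∞) → ℝ` is uniformly continuous and
`∫_0^t f` has a finite limit as `t → ∞`, then `f(t) → 0`. -/
theorem barbalat (f : ℝ → ℝ) (hf : UniformContinuousOn f (Set.Ici 0))
    (l : ℝ)
    (hl : Filter.Tendsto (fun t => ∫ s in (0:ℝ)..t, f s) Filter.atTop (nhds l)) :
    Filter.Tendsto f Filter.atTop (nhds 0) := by
  refine Metric.tendsto_nhds.mpr fun ε hε => ?_
  obtain ⟨d, hd, hfd⟩ := Metric.uniformContinuousOn_iff_le.mp hf (ε / 4) (by positivity)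
  have hwindow := Metric.tendsto_nhds.mp
    (tendsto_intervalIntegral_add_const_of_tendsto hf.continuousOn hl d) (ε * d / 4) (by positivity)
  filter_upwards [hwindow, eventually_ge_atTop 0] with t hsmall ht
  have hclose : ∀ s ∈ Ioc t (t + d), |f s - f t| ≤ ε / 4 := by
    rintro s ⟨hts, hsd⟩
    have hs : (0 : ℝ) ≤ s := by linarith
    simpa [Real.dist_eq] using
      hfd s hs t ht (by rw [Real.dist_eq, abs_of_pos (by linarith)]; linarith)
  have hbound := mul_abs_le_abs_intervalIntegral_add hd.le
    (.of_continuousOn_Ici hf.continuousOn ht (by linarith)) hclose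
  rw [Real.dist_eq, sub_zero] at hsmall ⊢
  have hlt : d * |f t| < d * ε := by linarith [mul_pos hd hε]
  exact lt_of_mul_lt_mul_left hlt hd.le
end
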